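/- arXiv:2412.10980 — 2 statements merged into one kernel-verified Lean document; each statement's English description precedes it below -/
import Mathlib

section
/- Let O be a commutative ring, G a group, H a subgroup of finite index with abelian quotient Δ = G/H, and T an O[G]-module that is free of rank 1 over O, on which H acts through a character. For a character η of Δ (valued in O^×, viewed as a character of G by inflation), the map f from the η-eigenspace of the induced module O[G] ⊗_{O[H]} T to T ⊗ η given by σ ⊗ t ↦ η(σ)·t is an isomorphism of O[G]-modules (where G acts on T ⊗ η by the H-action twisted by η). -/
/-!
An element of the `η`-eigenspace of `O[Δ]` is determined by its coefficient at `1`: it is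
`m 1 • ∑ δ, η(δ)⁻¹ δ`.  The map `F` sends this generator to `|Δ|`, a unit of `O`, so `F` is an
isomorphism from the eigenspace onto `O`.  Equivariance holds because translating by `δ`
multiplies `F` by `η δ`.
-/

open Finsupp

section Translation

variable {O Δ : Type*} [CommSemiring O] [Monoid Δ]

theorem map_mapDomain_mul_left_of_map_single {η : Δ →* O} {F : (Δ →₀ O) →ₗ[O] O}
    (hF : ∀ (δ : Δ) (a : O), F (single δ a) = η δ * a) (δ : Δ) (m : Δ →₀ O) :
    F (mapDomain (δ * ·) m) = η δ * F m := by
  induction m using Finsupp.induction_linear with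
  | zero => simp
  | add m m' hm hm' => rw [mapDomain_add, map_add, hm, hm', map_add, mul_add]
  | single x a => rw [mapDomain_single, hF, hF, map_mul, mul_assoc]

end Translation

section Eigenspace

variable {O Δ : Type*} [CommSemiring O] [Group Δ] [Fintype Δ] (η : Δ →* Oˣ)

noncomputable def charInvSum : Δ →₀ O := ∑ δ, single δ ((η δ)⁻¹ : Oˣ)

@[simp]
theorem charInvSum_apply (δ : Δ) : charInvSum η δ = ((η δ)⁻¹ : Oˣ) := by
  classical
  simp [charInvSum, Finset.sum_apply', single_apply]

theorem mapDomain_mul_left_charInvSum (δ : Δ) :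
    mapDomain (δ * ·) (charInvSum η) = (η δ : O) • charInvSum η := by
  ext x
  have hx : x = δ * (δ⁻¹ * x) := (mul_inv_cancel_left δ x).symm
  rw [hx, mapDomain_apply (mul_right_injective δ), ← hx, Finsupp.smul_apply, smul_eq_mul,
    charInvSum_apply, charInvSum_apply, map_mul, map_inv, mul_inv_rev, inv_inv,
    Units.val_mul, mul_comm]

theorem mapDomain_mul_left_eq_smul_iff (m : Δ →₀ O) :
    (∀ δ : Δ, mapDomain (δ * ·) m = (η δ : O) • m) ↔ m = m 1 • charInvSum η := by
  constructor
  · intro hm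
    ext δ
    have h1 : mapDomain (δ * ·) m (δ * 1) = m 1 := mapDomain_apply (mul_right_injective δ) m 1
    rw [hm δ, mul_one, Finsupp.smul_apply, smul_eq_mul] at h1
    rw [Finsupp.smul_apply, smul_eq_mul, charInvSum_apply, ← h1, mul_right_comm,
      Units.mul_inv, one_mul]
  · intro hm δ
    rw [hm, mapDomain_smul, mapDomain_mul_left_charInvSum, smul_comm]

theorem map_charInvSum_of_map_single {F : (Δ →₀ O) →ₗ[O] O}
    (hF : ∀ (δ : Δ) (a : O), F (single δ a) = (η δ : O) * a) :
    F (charInvSum η) = Fintype.card Δ := by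
  simp [charInvSum, hF, Finset.card_univ]

end Eigenspace

theorem stmt_0_general {O : Type*} [CommRing O] {G : Type*} [Group G] {Δ : Type*} [CommGroup Δ]
    [Fintype Δ]
    (π : G →* Δ) (χ : G →* Oˣ) (η : Δ →* Oˣ)
    (hcard : IsUnit (Fintype.card Δ : O))
    (E : Submodule O (Δ →₀ O))
    (hE : ∀ m : Δ →₀ O, m ∈ E ↔
      ∀ δ : Δ, Finsupp.mapDomain (fun x : Δ => δ * x) m = (η δ : O) • m)
    (F : (Δ →₀ O) →ₗ[O] O)
    (hF : ∀ (δ : Δ) (a : O), F (Finsupp.single δ a) = (η δ : O) * a) :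
    Function.Bijective (fun m : E => F m.1) ∧
      ∀ (g : G) (m : Δ →₀ O),
        F ((χ g : O) • Finsupp.mapDomain (fun x : Δ => π g * x) m) =
          ((χ g : O) * (η (π g) : O)) * F m := by
  have hE' (m : Δ →₀ O) : m ∈ E ↔ m = m 1 • charInvSum η :=
    (hE m).trans (mapDomain_mul_left_eq_smul_iff η m)
  have hFE (m : Δ →₀ O) (hm : m ∈ E) : F m = m 1 * Fintype.card Δ := by
    rw [congrArg F ((hE' m).1 hm), map_smul, map_charInvSum_of_map_single η hF, smul_eq_mul]
  refine ⟨⟨fun ⟨m, hm⟩ ⟨m', hm'⟩ h => ?_, fun c => ?_⟩, fun g m => ?_⟩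
  · have h1 : m 1 = m' 1 := hcard.mul_right_cancel <| by simpa only [hFE m hm, hFE m' hm'] using h
    rw [Subtype.mk.injEq, (hE' m).1 hm, (hE' m').1 hm', h1]
  · have hv : charInvSum η ∈ E := by simp [hE']
    refine ⟨⟨(hcard.unit⁻¹ * c : O) • charInvSum η, E.smul_mem _ hv⟩, ?_⟩
    simp only [map_smul, map_charInvSum_of_map_single η hF, smul_eq_mul]
    rw [mul_right_comm, IsUnit.val_inv_mul, one_mul]
  · rw [map_smul, map_mapDomain_mul_left_of_map_single (η := (Units.coeHom O).comp η) hF,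
      smul_eq_mul, mul_assoc]
    rfl

/-- Let `O` be a commutative ring, `G` a group, `H ⊆ G` a subgroup of finite index with abelian
quotient `Δ = G/H` (here realized as a surjection `π : G ↠ Δ` onto a finite abelian group),
and let `T` be an `O[G]`-module, free of rank one over `O`, on which `H` acts through a
character; the action of `G` on the induced module `O[G] ⊗_{O[H]} T ≅ O[Δ]` is given (in the
natural basis) by `g • (single δ a) = single (π(g)·δ) (χ(g)·a)`.  For a character `η` of `Δ`,
the map `f : (O[G] ⊗_{O[H]} T)^η → T ⊗ η`, `σ ⊗ t ↦ η(σ)·t` — i.e. the `O`-linear map `F` with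
`F(single δ a) = η(δ)·a` restricted to the `η`-eigenspace `E` for the `Δ`-action — is an
isomorphism of `O[G]`-modules, where `G` acts on `T ⊗ η ≅ O` via `χ·(η ∘ π)`:  `F` is bijective
on `E` and intertwines the `G`-actions. -/
theorem stmt_0 {O : Type*} [CommRing O] {G : Type*} [Group G] {Δ : Type*} [CommGroup Δ]
    [Fintype Δ]
    (π : G →* Δ) (hπ : Function.Surjective π) (χ : G →* Oˣ) (η : Δ →* Oˣ)
    (hcard : IsUnit (Fintype.card Δ : O))
    (E : Submodule O (Δ →₀ O))
    (hE : ∀ m : Δ →₀ O, m ∈ E ↔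
      ∀ δ : Δ, Finsupp.mapDomain (fun x : Δ => δ * x) m = (η δ : O) • m)
    (F : (Δ →₀ O) →ₗ[O] O)
    (hF : ∀ (δ : Δ) (a : O), F (Finsupp.single δ a) = (η δ : O) * a) :
    Function.Bijective (fun m : E => F m.1) ∧
      ∀ (g : G) (m : Δ →₀ O),
        F ((χ g : O) • Finsupp.mapDomain (fun x : Δ => π g * x) m) =
          ((χ g : O) * (η (π g) : O)) * F m :=
  stmt_0_general π χ η hcard E hE F hF
end

section
/- Let R be a discrete valuation ring with maximal ideal generated by t, and let M be a finitely generated torsion R[[X]]-module, localized appropriately so that M is a module over the localization Λ_P at P_cyc = (t, X). Suppose M is a finitely generated torsion module over Λ = R[[X]]. Then the sequence of R-modules (X^{r−1}M)/(X^r M) stabilizes up to the transition maps induced by multiplication by X, and the direct limit lim_r (X^{r−1}M)/(X^r M) is a finitely generated torsion R-module (so that a_P(M) := length_R(lim_r (X^{r−1}M)/(X^r M)) is finite). -/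
/-!
Since `Λ` is Noetherian, the chain `ker (X^r)` on `M` stabilises, so for large `r`,
`X^{r+1}(m - X m') = 0` forces `X^r (m - X m') = 0`: this is injectivity of
`X : X^r M / X^{r+1} M → X^{r+1} M / X^{r+2} M`, which is always surjective. `X` kills these
pieces, so `Λ` acts on them through `R = Λ/X` and they are finitely generated over `R`. A nonzero
annihilator `X^k g` of `M` with `g(0) ≠ 0` makes `g(0)` kill the pieces for `r ≥ k`, and a
finitely generated module over a DVR killed by a nonzero element has finite length.
-/

open Filter PowerSeries

section GradedPieces

variable {A M : Type*} [CommRing A] [AddCommGroup M] [Module A M] {a : A}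

theorem Submodule.mem_span_singleton_pow_smul_top {r : ℕ} {m : M} :
    m ∈ Ideal.span {a} ^ r • (⊤ : Submodule A M) ↔ ∃ y, a ^ r • y = m := by
  simp [Ideal.span_singleton_pow, Submodule.ideal_span_singleton_smul,
    Submodule.mem_smul_pointwise_iff_exists]

variable {S : ℕ → Submodule A M}

def gradedPiece (S : ℕ → Submodule A M) (r : ℕ) : Submodule A (M ⧸ S (r + 1)) :=
  (S r).map (S (r + 1)).mkQ

theorem map_gradedPiece_eq (hS : ∀ r, S r = Ideal.span {a} ^ r • ⊤)
    (ψ : ∀ r : ℕ, (M ⧸ S (r + 1)) →ₗ[A] M ⧸ S (r + 2))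
    (hψ : ∀ (r : ℕ) (m : M), ψ r ((S (r + 1)).mkQ m) = (S (r + 2)).mkQ (a • m)) (r : ℕ) :
    (gradedPiece S r).map (ψ r) = gradedPiece S (r + 1) := by
  ext q
  simp only [gradedPiece, Submodule.mem_map, hS, Submodule.mem_span_singleton_pow_smul_top]
  constructor
  · rintro ⟨_, ⟨_, ⟨y, rfl⟩, rfl⟩, rfl⟩
    exact ⟨_, ⟨y, rfl⟩, by rw [hψ, smul_smul, ← pow_succ']⟩
  · rintro ⟨_, ⟨y, rfl⟩, rfl⟩
    exact ⟨_, ⟨_, ⟨y, rfl⟩, rfl⟩, by rw [hψ, smul_smul, ← pow_succ']⟩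

theorem injOn_gradedPiece (hS : ∀ r, S r = Ideal.span {a} ^ r • ⊤)
    (ψ : ∀ r : ℕ, (M ⧸ S (r + 1)) →ₗ[A] M ⧸ S (r + 2))
    (hψ : ∀ (r : ℕ) (m : M), ψ r ((S (r + 1)).mkQ m) = (S (r + 2)).mkQ (a • m)) {r : ℕ}
    (hr : ∀ z : M, a ^ (r + 1) • z = 0 → a ^ r • z = 0) :
    Set.InjOn (ψ r) (gradedPiece S r) := by
  rintro _ ⟨_, hx, rfl⟩ _ ⟨_, hy, rfl⟩ h
  rw [SetLike.mem_coe, hS, Submodule.mem_span_singleton_pow_smul_top] at hx hy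
  obtain ⟨x, rfl⟩ := hx
  obtain ⟨y, rfl⟩ := hy
  rw [hψ, hψ] at h
  simp only [Submodule.mkQ_apply, Submodule.Quotient.eq, hS,
    Submodule.mem_span_singleton_pow_smul_top] at h ⊢
  obtain ⟨z, hz⟩ := h
  refine ⟨z, ?_⟩
  have hkill : a ^ (r + 1) • (x - y - a • z) = 0 := by
    linear_combination (norm := module) -hz
  linear_combination (norm := module) -(hr _ hkill)

theorem smul_eq_zero_of_mem_gradedPiece (hS : ∀ r, S r = Ideal.span {a} ^ r • ⊤) {r : ℕ}
    {q : M ⧸ S (r + 1)} (hq : q ∈ gradedPiece S r) : a • q = 0 := by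
  obtain ⟨_, hx, rfl⟩ := hq
  rw [SetLike.mem_coe, hS, Submodule.mem_span_singleton_pow_smul_top] at hx
  obtain ⟨x, rfl⟩ := hx
  rw [← map_smul, Submodule.mkQ_apply, Submodule.Quotient.mk_eq_zero, hS,
    Submodule.mem_span_singleton_pow_smul_top]
  exact ⟨x, by rw [smul_smul, pow_succ']⟩

theorem smul_eq_zero_of_mem_gradedPiece_of_pow_mul_smul_eq_zero
    (hS : ∀ r, S r = Ideal.span {a} ^ r • ⊤) {b : A} {k r : ℕ} (hkr : k ≤ r)
    (hb : ∀ m : M, (a ^ k * b) • m = 0) {q : M ⧸ S (r + 1)}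
    (hq : q ∈ gradedPiece S r) : b • q = 0 := by
  obtain ⟨_, hx, rfl⟩ := hq
  rw [SetLike.mem_coe, hS, Submodule.mem_span_singleton_pow_smul_top] at hx
  obtain ⟨x, rfl⟩ := hx
  obtain ⟨j, rfl⟩ := Nat.exists_eq_add_of_le hkr
  have : b • a ^ (k + j) • x = a ^ j • (a ^ k * b) • x := by module
  rw [← map_smul, this, hb, smul_zero, map_zero]

theorem eventually_pow_smul_eq_zero_of_pow_succ_smul_eq_zero [IsNoetherian A M] (a : A) :
    ∀ᶠ r in atTop, ∀ z : M, a ^ (r + 1) • z = 0 → a ^ r • z = 0 := by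
  let f := algebraMap A (Module.End A M) a
  have hf (k : ℕ) (z : M) : (f ^ k) z = a ^ k • z := by
    rw [← map_pow, Module.algebraMap_end_apply]
  filter_upwards [f.eventually_iSup_ker_pow_eq] with r hr z hz
  have hz' : z ∈ ⨆ k, LinearMap.ker (f ^ k) :=
    Submodule.mem_iSup_of_mem (r + 1) (by rwa [LinearMap.mem_ker, hf])
  rwa [hr, LinearMap.mem_ker, hf] at hz'

end GradedPieces

theorem isArtinian_of_smul_eq_zero {R P : Type*} [CommRing R] [IsNoetherianRing R]
    [Ring.KrullDimLE 1 R] [AddCommGroup P] [Module R P] [Module.Finite R P] {c : R}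
    (hc : c ∈ nonZeroDivisors R) (h : ∀ p : P, c • p = 0) : IsArtinian R P := by
  have hP : Module.IsTorsionBySet R P (Ideal.span {c}) :=
    (Module.isTorsionBySet_span_singleton_iff c).mpr h
  let _ := hP.module
  have : IsScalarTower R (R ⧸ Ideal.span {c}) P := hP.isScalarTower
  have : IsArtinianRing (R ⧸ Ideal.span {c}) := isArtinian_of_tower R
    (isFiniteLength_iff_isNoetherian_isArtinian.mp
      (isFiniteLength_quotient_span_singleton R hc)).2
  have : Module.Finite (R ⧸ Ideal.span {c}) P := Module.Finite.of_restrictScalars_finite R _ P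
  exact isArtinian_of_surjective_algebraMap (Ideal.Quotient.mk_surjective (I := Ideal.span {c}))

namespace PowerSeries

variable {R P : Type*} [CommRing R] [AddCommGroup P] [Module R⟦X⟧ P] [Module R P]
  [IsScalarTower R R⟦X⟧ P]

theorem smul_eq_constantCoeff_smul {p : P} (hp : (X : R⟦X⟧) • p = 0) (f : R⟦X⟧) :
    f • p = constantCoeff f • p := by
  conv_lhs => rw [eq_X_mul_shift_add_const f]
  rw [add_smul, mul_comm, mul_smul, hp, smul_zero, zero_add, ← algebraMap_eq, algebraMap_smul]

theorem finite_of_X_smul_eq_zero [Module.Finite R⟦X⟧ P] (hX : ∀ p : P, (X : R⟦X⟧) • p = 0) :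
    Module.Finite R P := by
  obtain ⟨s, hs⟩ := Module.Finite.fg_top (R := R⟦X⟧) (M := P)
  refine ⟨s, eq_top_iff.mpr ?_⟩
  rintro p -
  have hp : p ∈ Submodule.span R⟦X⟧ (s : Set P) := hs ▸ Submodule.mem_top
  induction hp using Submodule.span_induction with
  | mem x hx => exact Submodule.subset_span hx
  | zero => exact zero_mem _
  | add x y _ _ hx hy => exact add_mem hx hy
  | smul f x _ hx => rw [smul_eq_constantCoeff_smul (hX x)]; exact Submodule.smul_mem _ _ hx

theorem exists_X_pow_mul_smul_eq_zero [Nontrivial R] {M : Type*} [AddCommGroup M]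
    [Module R⟦X⟧ M] [Module.Finite R⟦X⟧ M] (htor : Module.IsTorsion R⟦X⟧ M) :
    ∃ (k : ℕ) (g : R⟦X⟧), constantCoeff g ≠ 0 ∧ ∀ m : M, (X ^ k * g) • m = 0 := by
  obtain ⟨f, hann, hf⟩ := Submodule.annihilator_top_inter_nonZeroDivisors htor
  refine ⟨f.order.toNat, f.divXPowOrder,
    constantCoeff_divXPowOrder_eq_zero_iff.not.mpr (nonZeroDivisors.ne_zero hf), fun m => ?_⟩
  rw [X_pow_order_mul_divXPowOrder]
  exact Submodule.mem_annihilator.mp hann m Submodule.mem_top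

end PowerSeries

/-- Well-definedness of Nekovář's invariant `a_P(M)`.  Let `R` be a discrete valuation ring,
`Λ = R[[X]]`, and `M` a finitely generated torsion `Λ`-module.  Write `S r = X^r M` and let
`Q r ⊆ M/X^{r+1}M` be the image of `X^r M`, so that `Q r ≅ (X^r M)/(X^{r+1} M)`; and let
`ψ r : M/X^{r+1}M → M/X^{r+2}M` be the map induced by multiplication by `X`.  Then the system
`(X^r M)/(X^{r+1}M)` stabilizes:  for all large `r`, multiplication by `X` maps `Q r`
bijectively onto `Q (r+1)`, and `Q r` is a finitely generated torsion (equivalently, finite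
length, i.e. Noetherian and Artinian) `R`-module — hence the direct limit
`lim_r (X^{r-1}M)/(X^r M)` is a finitely generated torsion `R`-module of finite length and
`a_P(M)` is well defined. -/
theorem stmt_5 {R : Type*} [CommRing R] [IsDomain R] [IsDiscreteValuationRing R]
    {M : Type*} [AddCommGroup M] [Module (PowerSeries R) M]
    [Module R M] [IsScalarTower R (PowerSeries R) M]
    [Module.Finite (PowerSeries R) M] (htor : Module.IsTorsion (PowerSeries R) M)
    (S : ℕ → Submodule (PowerSeries R) M)
    (hS : ∀ r : ℕ, S r = (Ideal.span {(PowerSeries.X : PowerSeries R)}) ^ r •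
      (⊤ : Submodule (PowerSeries R) M))
    (Q : ∀ r : ℕ, Submodule (PowerSeries R) (M ⧸ S (r + 1)))
    (hQ : ∀ r : ℕ, Q r = (S r).map (S (r + 1)).mkQ)
    (ψ : ∀ r : ℕ, (M ⧸ S (r + 1)) →ₗ[PowerSeries R] M ⧸ S (r + 2))
    (hψ : ∀ (r : ℕ) (m : M),
      ψ r ((S (r + 1)).mkQ m) = (S (r + 2)).mkQ ((PowerSeries.X : PowerSeries R) • m)) :
    ∃ N : ℕ, ∀ r : ℕ, N ≤ r →
      Set.InjOn (ψ r) (Q r) ∧ (Q r).map (ψ r) = Q (r + 1) ∧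
        Module.Finite R (Q r) ∧ IsArtinian R (Q r) := by
  obtain rfl : Q = gradedPiece S := funext hQ
  obtain ⟨k, g, hg, hann⟩ := exists_X_pow_mul_smul_eq_zero htor
  obtain ⟨N, hN⟩ := eventually_atTop.mp
    (eventually_pow_smul_eq_zero_of_pow_succ_smul_eq_zero (M := M) (X : R⟦X⟧))
  refine ⟨max N k, fun r hr => ⟨injOn_gradedPiece hS ψ hψ (hN r (le_of_max_le_left hr)),
    map_gradedPiece_eq hS ψ hψ r, ?_⟩⟩
  have hXQ (q : gradedPiece S r) : (X : R⟦X⟧) • q = 0 :=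
    Subtype.ext (smul_eq_zero_of_mem_gradedPiece hS q.2)
  have : Module.Finite R (gradedPiece S r) := finite_of_X_smul_eq_zero hXQ
  refine ⟨this, isArtinian_of_smul_eq_zero (mem_nonZeroDivisors_of_ne_zero hg) fun q => ?_⟩
  rw [← smul_eq_constantCoeff_smul (hXQ q)]
  exact Subtype.ext
    (smul_eq_zero_of_mem_gradedPiece_of_pow_mul_smul_eq_zero hS (le_of_max_le_right hr) hann q.2)
end
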